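/- Define η : X_{Ã} → X_A by deleting every occurrence of the symbol 0 from a sequence. Then η is well-defined, continuous, surjective, and satisfies σ_A^{k̃₁(x̃)}(η(σ_{Ã}(x̃))) = σ_A^{l̃₁(x̃)}(η(x̃)) for all x̃ ∈ X_{Ã}, where k̃₁(x̃) = 0 and l̃₁(x̃) = 0 if x̃₁ = 0, l̃₁(x̃) = 1 otherwise. -/

import Mathlib

/-! Because `Ã` forbids the word `00`, the nonzero positions of `x̃ ∈ X_Ã` form an infinite set
whose consecutive elements differ by `1` or `2`; a gap of `2` only occurs across a `0` preceded by
a `1`, and `Ã(1,0) = 1`, `Ã(0,j) = A(1,j)` make the surviving letters an `A`-admissible word.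
The `m`-th nonzero position of `y` is determined by `y` on the coordinates up to that position,
which gives continuity, and the map `ξ` inserting a `0` after every `1` is a right inverse of `η`. -/

/-- One-sided shift space over symbols `{1, …, N}`. -/
def ShiftSpace (N : ℕ) (A : ℕ → ℕ → ℕ) : Set (ℕ → ℕ) :=
  {x | (∀ n, 1 ≤ x n ∧ x n ≤ N) ∧ ∀ n, A (x n) (x (n + 1)) = 1}

/-- One-sided shift space over symbols `{0, 1, …, N}`. -/
def ShiftSpace0 (N : ℕ) (A : ℕ → ℕ → ℕ) : Set (ℕ → ℕ) :=
  {x | (∀ n, x n ≤ N) ∧ ∀ n, A (x n) (x (n + 1)) = 1}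

/-- The shift on raw sequences. -/
def rawShift (x : ℕ → ℕ) : ℕ → ℕ := fun n => x (n + 1)

/-- The expansion `Ã` of the matrix `A` at the vertex `1`, over the symbol set
`{0, 1, …, N}`: `Ã(1,0) = 1`, `Ã(1,j) = 0` for `j ≥ 1`; `Ã(0,0) = 0`,
`Ã(0,j) = A(1,j)` for `j ≥ 1`; `Ã(i,0) = 0`, `Ã(i,j) = A(i,j)` for `i ≥ 2`. -/
def expandAt1 (A : ℕ → ℕ → ℕ) : ℕ → ℕ → ℕ := fun i j =>
  if i = 1 then (if j = 0 then 1 else 0)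
  else if i = 0 then (if j = 0 then 0 else A 1 j)
  else if j = 0 then 0 else A i j

/-- The position in `ξ(x)` of the `n`-th letter of `x`, where `ξ` replaces
every symbol `1` by the word `(1,0)`. -/
def posf (x : ℕ → ℕ) : ℕ → ℕ
  | 0 => 0
  | n + 1 => posf x n + (if x n = 1 then 2 else 1)

/-- The map `ξ : X_A → X_Ã` replacing every occurrence of the symbol `1`
by the word `(1,0)`. -/
noncomputable def xiMap (x : ℕ → ℕ) : ℕ → ℕ := fun m =>
  letI := Classical.dec (∃ n, posf x n = m)
  if h : ∃ n, posf x n = m then x h.choose else 0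

/-- The map `η : X_Ã → X_A` deleting every occurrence of the symbol `0`. -/
noncomputable def etaMap (x : ℕ → ℕ) : ℕ → ℕ := fun m =>
  x (Nat.nth (fun i => x i ≠ 0) m)

open Filter Topology

namespace Nat

variable {p q : ℕ → Prop}

theorem infinite_setOf_of_forall_or_succ (h : ∀ n, p n ∨ p (n + 1)) : {n | p n}.Infinite :=
  Set.infinite_of_forall_exists_gt fun a =>
    (h (a + 1)).elim (fun ha => ⟨a + 1, ha, by omega⟩) fun ha => ⟨a + 2, ha, by omega⟩

theorem nth_succ_of_forall_or_succ (h : ∀ n, p n ∨ p (n + 1)) (m : ℕ) :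
    nth p (m + 1) = nth p m + 1 ∨ (¬p (nth p m + 1) ∧ nth p (m + 1) = nth p m + 2) := by
  have hp := infinite_setOf_of_forall_or_succ h
  have hlt : nth p m < nth p (m + 1) := nth_strictMono hp m.lt_succ_self
  have hle : ∀ a, p a → nth p m < a → nth p (m + 1) ≤ a := fun a ha hma => by
    by_contra! hlt'
    exact absurd (le_nth_of_lt_nth_succ hlt' ha) (not_le.2 hma)
  by_cases h1 : p (nth p m + 1)
  · exact Or.inl (by have := hle _ h1 (by omega); omega)
  · have hne : nth p (m + 1) ≠ nth p m + 1 := fun e => h1 (e ▸ nth_mem_of_infinite hp _)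
    have := hle _ ((h _).resolve_left h1) (by omega)
    exact Or.inr ⟨h1, by omega⟩

theorem count_congr_of_forall_lt [DecidablePred p] [DecidablePred q] {n : ℕ}
    (h : ∀ i < n, p i ↔ q i) : count p n = count q n := by
  simp only [count_eq_card_filter_range]
  exact congrArg _ (Finset.filter_congr fun i hi => h i (Finset.mem_range.1 hi))

theorem nth_eq_nth_of_forall_le_iff (hp : {n | p n}.Infinite) {m : ℕ}
    (h : ∀ i ≤ nth p m, p i ↔ q i) : nth q m = nth p m := by
  classical
  have hq : q (nth p m) := (h _ le_rfl).1 (nth_mem_of_infinite hp m)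
  have hcount : count q (nth p m) = m := by
    rw [← count_congr_of_forall_lt fun i hi => h i hi.le, count_nth_of_infinite hp]
  simpa only [hcount] using nth_count hq

theorem nth_add_one_eq_nth_add_ite [DecidablePred p] (hp : {n | p (n + 1)}.Infinite) (m : ℕ) :
    nth (fun i => p (i + 1)) m + 1 = nth p (m + if p 0 then 1 else 0) := by
  have hm : p (nth (fun i => p (i + 1)) m + 1) := nth_mem_of_infinite hp m
  have := nth_count hm
  rwa [count_succ', count_nth_of_infinite hp, eq_comm] at this

end Nat

section Expansion

variable {A : ℕ → ℕ → ℕ} {i j : ℕ}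

theorem expandAt1_zero_zero : expandAt1 A 0 0 = 0 := rfl

theorem expandAt1_one_zero : expandAt1 A 1 0 = 1 := rfl

theorem expandAt1_zero_left (hj : j ≠ 0) : expandAt1 A 0 j = A 1 j := by
  simp [expandAt1, hj]

theorem expandAt1_of_ne (hi₀ : i ≠ 0) (hi₁ : i ≠ 1) (hj : j ≠ 0) : expandAt1 A i j = A i j := by
  simp [expandAt1, hi₀, hi₁, hj]

theorem eq_one_of_expandAt1_zero_right (h : expandAt1 A i 0 = 1) : i = 1 := by
  by_contra hi
  rcases eq_or_ne i 0 with rfl | hi₀ <;> simp_all [expandAt1]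

theorem eq_one_of_expandAt1_eq_one (hi : i ≠ 0) (hj : j ≠ 0) (h : expandAt1 A i j = 1) :
    A i j = 1 := by
  rcases eq_or_ne i 1 with rfl | hi₁
  · simp [expandAt1, hj] at h
  · rwa [expandAt1_of_ne hi hi₁ hj] at h

end Expansion

section Eta

variable {N : ℕ} {A : ℕ → ℕ → ℕ} {x : ℕ → ℕ}

theorem ne_zero_or_succ_ne_zero_of_mem (hx : x ∈ ShiftSpace0 N (expandAt1 A)) (n : ℕ) :
    x n ≠ 0 ∨ x (n + 1) ≠ 0 := by
  by_contra! h
  simpa [h.1, h.2, expandAt1_zero_zero] using hx.2 n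

theorem etaMap_mem_shiftSpace (hx : x ∈ ShiftSpace0 N (expandAt1 A)) :
    etaMap x ∈ ShiftSpace N A := by
  have hor := ne_zero_or_succ_ne_zero_of_mem hx
  have hnz : ∀ m, etaMap x m ≠ 0 :=
    Nat.nth_mem_of_infinite (Nat.infinite_setOf_of_forall_or_succ hor)
  refine ⟨fun m => ⟨Nat.one_le_iff_ne_zero.2 (hnz m), hx.1 _⟩, fun m => ?_⟩
  rcases Nat.nth_succ_of_forall_or_succ hor m with hsucc | ⟨hzero, hsucc⟩
  · have h := hx.2 (Nat.nth (fun i => x i ≠ 0) m)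
    rw [← hsucc] at h
    exact eq_one_of_expandAt1_eq_one (hnz m) (hnz (m + 1)) h
  · rw [not_not] at hzero
    have h₁ := hx.2 (Nat.nth (fun i => x i ≠ 0) m)
    have h₂ := hx.2 (Nat.nth (fun i => x i ≠ 0) m + 1)
    rw [hzero] at h₁ h₂
    rw [add_assoc, ← hsucc] at h₂
    change expandAt1 A (etaMap x m) 0 = 1 at h₁
    change expandAt1 A 0 (etaMap x (m + 1)) = 1 at h₂
    rw [expandAt1_zero_left (hnz (m + 1))] at h₂
    rwa [eq_one_of_expandAt1_zero_right h₁]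

theorem continuousAt_etaMap (hx : {i | x i ≠ 0}.Infinite) : ContinuousAt etaMap x := by
  refine continuousAt_pi.2 fun m => ?_
  have hcoord : ∀ i, ∀ᶠ y in 𝓝 x, y i = x i := fun i => by
    simpa only [nhds_discrete, tendsto_pure] using (continuous_apply i).tendsto x
  have hagree : ∀ᶠ y in 𝓝 x, ∀ i ∈ Set.Iic (Nat.nth (fun i => x i ≠ 0) m), y i = x i :=
    (Set.finite_Iic _).eventually_all.2 fun i _ => hcoord i
  rw [ContinuousAt, nhds_discrete ℕ, tendsto_pure]
  filter_upwards [hagree] with y hy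
  have hnth : Nat.nth (fun i => y i ≠ 0) m = Nat.nth (fun i => x i ≠ 0) m :=
    Nat.nth_eq_nth_of_forall_le_iff hx fun i hi => by rw [hy i hi]
  change y (Nat.nth _ m) = x (Nat.nth _ m)
  rw [hnth, hy _ Set.self_mem_Iic]

theorem rawShift_iterate_apply (k : ℕ) (y : ℕ → ℕ) (m : ℕ) : rawShift^[k] y m = y (m + k) := by
  induction k generalizing y with
  | zero => rfl
  | succ k ih => rw [Function.iterate_succ_apply, ih]; rfl

theorem etaMap_rawShift (hx : {i | x (i + 1) ≠ 0}.Infinite) :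
    etaMap (rawShift x) = rawShift^[if x 0 = 0 then 0 else 1] (etaMap x) := by
  funext m
  have hnth := Nat.nth_add_one_eq_nth_add_ite (p := fun i => x i ≠ 0) hx m
  have hite : (if x 0 ≠ 0 then 1 else 0) = if x 0 = 0 then 0 else 1 := by
    by_cases h : x 0 = 0 <;> simp [h]
  rw [rawShift_iterate_apply, ← hite]
  change x (Nat.nth (fun i => x (i + 1) ≠ 0) m + 1) = x (Nat.nth _ _)
  rw [hnth]

end Eta

section Xi

variable {N : ℕ} {A : ℕ → ℕ → ℕ} {x : ℕ → ℕ} {n : ℕ}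

theorem posf_succ_of_eq_one (h : x n = 1) : posf x (n + 1) = posf x n + 2 := by
  simp [posf, h]

theorem posf_succ_of_ne_one (h : x n ≠ 1) : posf x (n + 1) = posf x n + 1 := by
  simp [posf, h]

theorem posf_strictMono (x : ℕ → ℕ) : StrictMono (posf x) :=
  strictMono_nat_of_lt_succ fun n => by
    by_cases h : x n = 1
    · rw [posf_succ_of_eq_one h]; omega
    · rw [posf_succ_of_ne_one h]; omega

theorem exists_eq_posf_or_eq_posf_add_one (x : ℕ → ℕ) (m : ℕ) :
    ∃ n, m = posf x n ∨ (x n = 1 ∧ m = posf x n + 1) := by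
  induction m with
  | zero => exact ⟨0, Or.inl rfl⟩
  | succ m ih =>
    obtain ⟨n, rfl | ⟨h, rfl⟩⟩ := ih
    · by_cases h : x n = 1
      · exact ⟨n, Or.inr ⟨h, rfl⟩⟩
      · exact ⟨n + 1, Or.inl (posf_succ_of_ne_one h).symm⟩
    · exact ⟨n + 1, Or.inl (posf_succ_of_eq_one h).symm⟩

theorem xiMap_posf (x : ℕ → ℕ) (n : ℕ) : xiMap x (posf x n) = x n := by
  have h : ∃ k, posf x k = posf x n := ⟨n, rfl⟩
  rw [xiMap, dif_pos h]
  exact congrArg x ((posf_strictMono x).injective h.choose_spec)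

theorem xiMap_eq_zero_of_notMem_range {m : ℕ} (h : m ∉ Set.range (posf x)) : xiMap x m = 0 :=
  dif_neg h

theorem xiMap_posf_add_one (h : x n = 1) : xiMap x (posf x n + 1) = 0 := by
  refine xiMap_eq_zero_of_notMem_range fun ⟨k, hk⟩ => ?_
  have h₁ : n < k := (posf_strictMono x).lt_iff_lt.1 (by omega)
  have h₂ : k < n + 1 := (posf_strictMono x).lt_iff_lt.1 (by rw [posf_succ_of_eq_one h]; omega)
  omega

theorem xiMap_mem_shiftSpace0 (hx : x ∈ ShiftSpace N A) : xiMap x ∈ ShiftSpace0 N (expandAt1 A) := by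
  have hne : ∀ n, x n ≠ 0 := fun n => Nat.one_le_iff_ne_zero.1 (hx.1 n).1
  refine ⟨fun m => ?_, fun m => ?_⟩
  · obtain ⟨n, rfl | ⟨h, rfl⟩⟩ := exists_eq_posf_or_eq_posf_add_one x m
    · exact (xiMap_posf x n).symm ▸ (hx.1 n).2
    · exact (xiMap_posf_add_one h).symm ▸ N.zero_le
  · obtain ⟨n, rfl | ⟨h, rfl⟩⟩ := exists_eq_posf_or_eq_posf_add_one x m
    · by_cases h : x n = 1
      · rw [xiMap_posf, xiMap_posf_add_one h, h, expandAt1_one_zero]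
      · rw [← posf_succ_of_ne_one h, xiMap_posf, xiMap_posf, expandAt1_of_ne (hne n) h (hne _)]
        exact hx.2 n
    · rw [xiMap_posf_add_one h, add_assoc, ← posf_succ_of_eq_one h, xiMap_posf,
        expandAt1_zero_left (hne _)]
      simpa only [h] using hx.2 n

theorem etaMap_xiMap (hx : ∀ n, x n ≠ 0) : etaMap (xiMap x) = x := by
  have hrange : ∀ k, xiMap x k ≠ 0 → k ∈ Set.range (posf x) := fun k hk =>
    by_contra fun h => hk (xiMap_eq_zero_of_notMem_range h)
  have hinf : {k | xiMap x k ≠ 0}.Infinite :=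
    (Set.infinite_range_of_injective (posf_strictMono x).injective).mono
      (by rintro _ ⟨n, rfl⟩; simp [xiMap_posf, hx n])
  funext n
  have hnth := Nat.nth_comp_of_strictMono (n := n) (posf_strictMono x) hrange
    fun hf => absurd hf hinf
  rw [Nat.nth_of_forall fun i _ => by simp [xiMap_posf, hx]] at hnth
  change xiMap x (Nat.nth _ n) = x n
  rw [← hnth, xiMap_posf]

end Xi

/-- `η` maps `X_Ã` onto `X_A`, is continuous and surjective, and
satisfies `σ_A^{k̃₁(x̃)}(η(σ_Ã(x̃))) = σ_A^{l̃₁(x̃)}(η(x̃))` with `k̃₁ = 0` and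
`l̃₁(x̃) = 0` if `x̃₁ = 0`, `l̃₁(x̃) = 1` otherwise. -/
theorem etaMap_properties (N : ℕ) (A : ℕ → ℕ → ℕ) :
    (∀ x ∈ ShiftSpace0 N (expandAt1 A), etaMap x ∈ ShiftSpace N A) ∧
    ContinuousOn etaMap (ShiftSpace0 N (expandAt1 A)) ∧
    (∀ x ∈ ShiftSpace N A, ∃ y ∈ ShiftSpace0 N (expandAt1 A), etaMap y = x) ∧
    (∀ x ∈ ShiftSpace0 N (expandAt1 A),
      etaMap (rawShift x) = rawShift^[if x 0 = 0 then 0 else 1] (etaMap x)) := by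
  refine ⟨fun x hx => etaMap_mem_shiftSpace hx, fun x hx => ?_,
    fun x hx => ⟨xiMap x, xiMap_mem_shiftSpace0 hx, ?_⟩, fun x hx => ?_⟩
  · exact (continuousAt_etaMap (Nat.infinite_setOf_of_forall_or_succ
      (ne_zero_or_succ_ne_zero_of_mem hx))).continuousWithinAt
  · exact etaMap_xiMap fun n => Nat.one_le_iff_ne_zero.1 (hx.1 n).1
  · exact etaMap_rawShift (Nat.infinite_setOf_of_forall_or_succ
      fun n => ne_zero_or_succ_ne_zero_of_mem hx (n + 1))
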